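/- arXiv:1402.0653 — 3 statements merged into one kernel-verified Lean document; each statement's English description precedes it below -/
import Mathlib

section
/- Let M ≥ 1 and let M(u,θ) be the (M+1)×(M+1) tridiagonal matrix with all diagonal entries equal to u, all subdiagonal entries equal to θ, and superdiagonal entries 1, 2, …, M (i.e. entry (i+1,i) = θ, entry (i,i) = u, entry (i,i+1) = i for 1-based indexing shifted so that the superdiagonal entry in row α is α+1 for α = 0,…,M−1). Then the characteristic polynomial of M(u,θ) equals θ^{(M+1)/2} · He_{M+1}((λ−u)/√θ), for all u ∈ ℝ and θ > 0. -/
/-! Expanding the leading `(n + 2)`-block of a tridiagonal matrix along its last row gives the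
three-term recurrence `Dₙ₊₂ = aₙ₊₁ Dₙ₊₁ - bₙ cₙ Dₙ` for its leading principal minors. For
`λ·1 - M(u,θ)` this reads `Dₙ₊₂ = (λ - u) Dₙ₊₁ - (n + 1) θ Dₙ`, which is the Hermite recurrence
after the substitution `Dₙ = √θ ^ n · Heₙ ((λ - u) / √θ)`. -/

noncomputable def He : ℕ → ℝ → ℝ
  | 0, _ => 1
  | 1, x => x
  | (n + 2), x => x * He (n + 1) x - (n + 1 : ℝ) * He n x

/-- The tridiagonal matrix M(u,θ): diagonal u, subdiagonal θ, superdiagonal 1,…,M. -/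
noncomputable def Mtri (M : ℕ) (u θ : ℝ) : Matrix (Fin (M + 1)) (Fin (M + 1)) ℝ :=
  fun i j =>
    if (i : ℕ) = (j : ℕ) then u
    else if (i : ℕ) = (j : ℕ) + 1 then θ
    else if (j : ℕ) = (i : ℕ) + 1 then (i : ℝ) + 1
    else 0

namespace Matrix

def leadingBlock {R : Type*} (A : Matrix ℕ ℕ R) (n : ℕ) : Matrix (Fin n) (Fin n) R :=
  A.submatrix Fin.val Fin.val

def IsTridiagonal {R : Type*} [Zero R] (A : Matrix ℕ ℕ R) : Prop :=
  ∀ i j, i + 1 < j ∨ j + 1 < i → A i j = 0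

theorem leadingBlock_submatrix_castSucc {R : Type*} (A : Matrix ℕ ℕ R) (n : ℕ) :
    (A.leadingBlock (n + 1)).submatrix Fin.castSucc Fin.castSucc = A.leadingBlock n :=
  rfl

variable {R : Type*} [CommRing R] {A : Matrix ℕ ℕ R}

/-- The cofactor of the entry `(n + 1, n)`: its last column is `A n (n + 1)` times a unit
vector. -/
theorem IsTridiagonal.det_leadingBlock_minor (hA : A.IsTridiagonal) (n : ℕ) :
    ((A.leadingBlock (n + 2)).submatrix Fin.castSucc (Fin.last n).castSucc.succAbove).det =
      A n (n + 1) * (A.leadingBlock n).det := by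
  have hcol : (Fin.last n).castSucc.succAbove (Fin.last n) = Fin.last (n + 1) :=
    Fin.succAbove_of_le_castSucc _ _ le_rfl
  rw [det_succ_column _ (Fin.last n), Fintype.sum_eq_single (Fin.last n)]
  · have hminor : ((A.leadingBlock (n + 2)).submatrix Fin.castSucc
        (Fin.last n).castSucc.succAbove).submatrix (Fin.last n).succAbove
        (Fin.last n).succAbove = A.leadingBlock n := by
      ext k l
      simp [leadingBlock, Fin.succAbove_of_castSucc_lt _ _ (Fin.castSucc_lt_last l)]
    rw [hminor]
    simp [hcol, leadingBlock]
  · intro i hi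
    have : (i : ℕ) < n := Fin.val_lt_last hi
    simp [leadingBlock, hcol, hA i (n + 1) (.inl (by omega))]

theorem IsTridiagonal.det_leadingBlock_add_two (hA : A.IsTridiagonal) (n : ℕ) :
    (A.leadingBlock (n + 2)).det = A (n + 1) (n + 1) * (A.leadingBlock (n + 1)).det
      - A (n + 1) n * A n (n + 1) * (A.leadingBlock n).det := by
  rw [det_succ_row _ (Fin.last (n + 1)),
    Fintype.sum_eq_add (Fin.last (n + 1)) (Fin.last n).castSucc (Fin.castSucc_lt_last _).ne']
  · rw [Fin.succAbove_last, hA.det_leadingBlock_minor, leadingBlock_submatrix_castSucc]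
    simp only [leadingBlock, submatrix_apply, Fin.val_last, Fin.val_castSucc, Even.add_self,
      Even.neg_pow, odd_add_one_self, Odd.neg_one_pow, one_pow, one_mul, neg_mul]
    ring
  · rintro j ⟨hj₁, hj₂⟩
    have : (j : ℕ) < n := by
      rw [Ne, Fin.ext_iff] at hj₁ hj₂
      simp only [Fin.val_last, Fin.val_castSucc] at hj₁ hj₂
      omega
    simp [leadingBlock, hA (n + 1) j (.inr (by omega))]

end Matrix

theorem eq_pow_mul_He_div_of_recurrence {D : ℕ → ℝ} {y s : ℝ} (hs : s ≠ 0) (h₀ : D 0 = 1)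
    (h₁ : D 1 = y) (hrec : ∀ n : ℕ, D (n + 2) = y * D (n + 1) - (n + 1) * s ^ 2 * D n)
    (n : ℕ) : D n = s ^ n * He n (y / s) := by
  induction n using Nat.twoStepInduction with
  | zero => simp [h₀, He]
  | one => simp [h₁, He, mul_div_cancel₀ _ hs]
  | more n ih₀ ih₁ =>
    rw [hrec, ih₀, ih₁, He]
    field_simp
    ring

def hermiteTridiag (u θ : ℝ) : Matrix ℕ ℕ ℝ := fun i j =>
  if i = j then u else if i = j + 1 then θ else if j = i + 1 then (i : ℝ) + 1 else 0

@[simp]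
theorem hermiteTridiag_self (u θ : ℝ) (i : ℕ) : hermiteTridiag u θ i i = u := by
  simp [hermiteTridiag]

@[simp]
theorem hermiteTridiag_succ_self (u θ : ℝ) (i : ℕ) : hermiteTridiag u θ (i + 1) i = θ := by
  simp [hermiteTridiag]

@[simp]
theorem hermiteTridiag_self_succ (u θ : ℝ) (i : ℕ) :
    hermiteTridiag u θ i (i + 1) = i + 1 := by
  simp [hermiteTridiag, show i ≠ i + 1 + 1 by omega]

theorem Mtri_eq_leadingBlock (M : ℕ) (u θ : ℝ) :
    Mtri M u θ = (hermiteTridiag u θ).leadingBlock (M + 1) :=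
  rfl

theorem isTridiagonal_smul_one_sub_hermiteTridiag (lam u θ : ℝ) :
    (lam • 1 - hermiteTridiag u θ).IsTridiagonal := by
  intro i j hij
  have hne : i ≠ j := by omega
  simp only [hermiteTridiag, Matrix.sub_apply, Matrix.smul_apply, Matrix.one_apply_ne hne]
  split_ifs <;> first | omega | simp

theorem det_leadingBlock_smul_one_sub_hermiteTridiag (lam u θ : ℝ) (hθ : 0 < θ) (n : ℕ) :
    ((lam • 1 - hermiteTridiag u θ).leadingBlock n).det =
      Real.sqrt θ ^ n * He n ((lam - u) / Real.sqrt θ) := by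
  refine eq_pow_mul_He_div_of_recurrence
    (D := fun k => ((lam • 1 - hermiteTridiag u θ).leadingBlock k).det)
    (Real.sqrt_pos.2 hθ).ne' Matrix.det_fin_zero ?_ (fun k => ?_) n
  · simp [Matrix.leadingBlock, hermiteTridiag]
  · rw [(isTridiagonal_smul_one_sub_hermiteTridiag lam u θ).det_leadingBlock_add_two,
      Real.sq_sqrt hθ.le]
    simp only [Matrix.sub_apply, Matrix.smul_apply, Matrix.one_apply_eq,
      Matrix.one_apply_ne (Nat.succ_ne_self _), Matrix.one_apply_ne (Nat.succ_ne_self _).symm,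
      smul_eq_mul, hermiteTridiag_self, hermiteTridiag_succ_self, hermiteTridiag_self_succ]
    ring

theorem charpoly_tridiagonal_hermite_general (M : ℕ) (u θ : ℝ) (hθ : 0 < θ)
    (lam : ℝ) :
    (lam • (1 : Matrix (Fin (M + 1)) (Fin (M + 1)) ℝ) - Mtri M u θ).det =
      Real.sqrt θ ^ (M + 1) * He (M + 1) ((lam - u) / Real.sqrt θ) := by
  have hblock : lam • (1 : Matrix (Fin (M + 1)) (Fin (M + 1)) ℝ) - Mtri M u θ =
      (lam • 1 - hermiteTridiag u θ).leadingBlock (M + 1) := by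
    ext i j
    simp [Mtri_eq_leadingBlock, Matrix.leadingBlock, Matrix.one_apply, Fin.ext_iff]
  rw [hblock, det_leadingBlock_smul_one_sub_hermiteTridiag lam u θ hθ]

theorem charpoly_tridiagonal_hermite (M : ℕ) (hM : 1 ≤ M) (u θ : ℝ) (hθ : 0 < θ)
    (lam : ℝ) :
    (lam • (1 : Matrix (Fin (M + 1)) (Fin (M + 1)) ℝ) - Mtri M u θ).det =
      Real.sqrt θ ^ (M + 1) * He (M + 1) ((lam - u) / Real.sqrt θ) :=
  charpoly_tridiagonal_hermite_general M u θ hθ lam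
end

section
/- For all M ≥ 1, u ∈ ℝ, and θ > 0, the tridiagonal matrix M(u,θ) of size (M+1)×(M+1) (diagonal entries u, subdiagonal entries θ, superdiagonal entries 1, …, M) is diagonalizable over ℝ, with M+1 distinct real eigenvalues u + c_j √θ, where c_0 < ⋯ < c_M are the roots of the Hermite polynomial He_{M+1}. -/
/-!
For a root `x` of `He (M+1)` and `s = √θ`, the vector `(s^α / α! * He α x)_α` is an eigenvector
of `Mtri M u θ` with eigenvalue `u + x s`: its rows are the three-term recurrence
`He (α+1) = x He α - α He (α-1)`, and the last row closes up because `He (M+1) x = 0`.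

The roots of `He (M+1)` are real and distinct by the classical interlacing induction: at the roots
`r 0 < ⋯ < r n` of `He (n+1)` the recurrence gives `He (n+2) (r i) = -(n+1) He n (r i)`, so if
`He n` alternates in sign along them, `He (n+2)` alternates in sign along `-∞, r 0, …, r n, +∞`
and has a root in each of these `n + 2` gaps; writing `He (n+1)` as the product over its roots
shows that it alternates in sign along the new roots in turn.

Eigenvectors for distinct eigenvalues are independent, so they are the columns of an invertible
`P` with `Mtri M u θ = P D P⁻¹`.
-/

open Polynomial Matrix

namespace Polynomial

theorem derivative_hermite_succ (n : ℕ) :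
    derivative (hermite (n + 1)) = (n + 1 : ℤ[X]) * hermite n := by
  induction n with
  | zero => simp [hermite_zero]
  | succ n ih =>
    rw [hermite_succ (n + 1), derivative_sub, derivative_mul, derivative_X, ih,
      derivative_mul, hermite_succ n]
    simp only [derivative_add, derivative_natCast, derivative_one]
    push_cast
    ring

theorem hermite_succ_succ (n : ℕ) :
    hermite (n + 2) = X * hermite (n + 1) - (n + 1 : ℤ[X]) * hermite n := by
  rw [hermite_succ (n + 1), derivative_hermite_succ]

theorem eq_prod_X_sub_C_of_monic_of_roots {R : Type*} [CommRing R] [IsDomain R]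
    {p : R[X]} {n : ℕ} (hp : p.Monic) (hdeg : p.natDegree = n) {r : Fin n → R}
    (hr : Function.Injective r) (hroot : ∀ i, p.IsRoot (r i)) :
    p = ∏ i, (X - C (r i)) := by
  have hle : Finset.univ.val.map r ≤ p.roots := by
    rw [Multiset.le_iff_subset (Finset.univ.nodup.map hr)]
    intro a ha
    obtain ⟨i, -, rfl⟩ := Multiset.mem_map.1 ha
    exact (mem_roots hp.ne_zero).2 (hroot i)
  have hroots : Finset.univ.val.map r = p.roots :=
    Multiset.eq_of_le_of_card_le hle (by simpa [hdeg] using card_roots' p)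
  conv_lhs => rw [← prod_multiset_X_sub_C_of_monic_of_roots_card_eq hp
    (by rw [← hroots, hdeg]; simp), ← hroots, Multiset.map_map]
  rfl

end Polynomial

theorem neg_one_pow_mul_prod_sub_pos {r : ℕ → ℝ} {y : ℝ} {j N : ℕ} (hjN : j ≤ N)
    (hlt : ∀ k < j, r k < y) (hgt : ∀ k, j ≤ k → k < N → y < r k) :
    0 < (-1) ^ (N - j) * ∏ k ∈ Finset.range N, (y - r k) := by
  induction N, hjN using Nat.le_induction with
  | base =>
    simpa using Finset.prod_pos fun k hk => sub_pos.2 (hlt k (Finset.mem_range.1 hk))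
  | succ N hjN ih =>
    have hprod := ih fun k hjk hkN => hgt k hjk (by omega)
    have hlast : y - r N < 0 := sub_neg.2 (hgt N hjN (by omega))
    rw [Finset.prod_range_succ, Nat.sub_add_comm hjN, pow_succ]
    nlinarith

theorem exists_roots_of_alternating {f : ℝ → ℝ} (hf : Continuous f) {x : ℕ → ℝ} {m : ℕ}
    (hx : ∀ j < m, x j < x (j + 1)) (hsign : ∀ j ≤ m, 0 < (-1) ^ (m - j) * f (x j)) :
    ∃ y : ℕ → ℝ, ∀ j < m, x j < y j ∧ y j < x (j + 1) ∧ f (y j) = 0 := by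
  have key : ∀ j < m, ∃ y, x j < y ∧ y < x (j + 1) ∧ f y = 0 := by
    intro j hj
    set e : ℝ := (-1) ^ (m - (j + 1))
    have hleft : e * f (x j) < 0 := by
      have := hsign j hj.le
      rw [show m - j = m - (j + 1) + 1 by omega, pow_succ] at this
      linarith
    obtain ⟨y, hy, hey⟩ := intermediate_value_Ioo (hx j hj).le
      (continuous_const.mul hf).continuousOn ⟨hleft, hsign (j + 1) hj⟩
    exact ⟨y, hy.1, hy.2, (mul_eq_zero.1 hey).resolve_left (pow_ne_zero _ (by norm_num))⟩
  choose! y hy using key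
  exact ⟨y, hy⟩

theorem He_eq_eval_hermite :
    ∀ (n : ℕ) (x : ℝ), He n x = ((hermite n).map (Int.castRingHom ℝ)).eval x
  | 0, x => by simp [He]
  | 1, x => by simp [He]
  | n + 2, x => by
    rw [He, He_eq_eval_hermite (n + 1), He_eq_eval_hermite n, hermite_succ_succ]
    simp

theorem monic_map_hermite (n : ℕ) : ((hermite n).map (Int.castRingHom ℝ)).Monic :=
  (hermite_monic n).map _

theorem natDegree_map_hermite (n : ℕ) :
    ((hermite n).map (Int.castRingHom ℝ)).natDegree = n := by
  rw [(hermite_monic n).natDegree_map, natDegree_hermite]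

theorem He_neg : ∀ (n : ℕ) (x : ℝ), He n (-x) = (-1) ^ n * He n x
  | 0, x => by simp [He]
  | 1, x => by simp [He]
  | n + 2, x => by
    rw [He, He, He_neg (n + 1), He_neg n]
    ring

theorem continuous_He (n : ℕ) : Continuous (He n) := by
  simp_rw [funext (He_eq_eval_hermite n)]
  exact Polynomial.continuous _

theorem eventually_He_pos {n : ℕ} (hn : n ≠ 0) : ∀ᶠ x in Filter.atTop, 0 < He n x := by
  have hlim := ((hermite n).map (Int.castRingHom ℝ)).tendsto_atTop_of_leadingCoeff_nonneg
    (by rw [degree_eq_natDegree (monic_map_hermite n).ne_zero, natDegree_map_hermite]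
        exact_mod_cast Nat.pos_of_ne_zero hn)
    (by rw [(monic_map_hermite n).leadingCoeff]; exact zero_le_one)
  filter_upwards [hlim.eventually_gt_atTop 0] with x hx
  rwa [He_eq_eval_hermite]

theorem He_succ_eq_prod_sub {n : ℕ} {r : ℕ → ℝ} (hr : StrictMonoOn r (Set.Iic n))
    (hroot : ∀ k ≤ n, He (n + 1) (r k) = 0) (t : ℝ) :
    He (n + 1) t = ∏ k ∈ Finset.range (n + 1), (t - r k) := by
  have hinj : Function.Injective fun k : Fin (n + 1) => r k := fun i j hij =>
    Fin.ext (hr.injOn (Nat.lt_succ_iff.1 i.2) (Nat.lt_succ_iff.1 j.2) hij)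
  have hprod := eq_prod_X_sub_C_of_monic_of_roots (monic_map_hermite _)
    (natDegree_map_hermite _) hinj
    (fun k => by rw [IsRoot, ← He_eq_eval_hermite, hroot k (Nat.lt_succ_iff.1 k.2)])
  rw [He_eq_eval_hermite, hprod, eval_prod, ← Fin.prod_univ_eq_prod_range (fun k => t - r k)]
  simp

def InterlacedRoots (n : ℕ) (r : ℕ → ℝ) : Prop :=
  StrictMonoOn r (Set.Iic n) ∧ ∀ i ≤ n, He (n + 1) (r i) = 0 ∧ 0 < (-1) ^ (n - i) * He n (r i)

theorem interlacedRoots_zero : InterlacedRoots 0 0 :=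
  ⟨fun i hi j hj hij => by simp_all, fun i hi => by simp [He]⟩

theorem He_succ_succ_of_root {n : ℕ} {x : ℝ} (hx : He (n + 1) x = 0) :
    He (n + 2) x = -(n + 1) * He n x := by
  rw [He, hx]; ring

theorem InterlacedRoots.exists_alternating_points {n : ℕ} {r : ℕ → ℝ}
    (hr : InterlacedRoots n r) :
    ∃ x : ℕ → ℝ, (∀ j < n + 2, x j < x (j + 1)) ∧
      (∀ j ≤ n + 2, 0 < (-1) ^ (n + 2 - j) * He (n + 2) (x j)) ∧
      ∀ j, 1 ≤ j → j ≤ n + 1 → x j = r (j - 1) := by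
  obtain ⟨hmono, hroot⟩ := hr
  obtain ⟨b, hb, hbpos⟩ := ((Filter.eventually_gt_atTop (max (r n) (-r 0))).and
    (eventually_He_pos (n := n + 2) (by omega))).exists
  rw [max_lt_iff] at hb
  -- the points `-b, r 0, …, r n, b`
  refine ⟨fun j => if j = 0 then -b else if j ≤ n + 1 then r (j - 1) else b, ?_, ?_,
    fun j h1 h2 => by simp only [if_neg (show j ≠ 0 by omega), if_pos h2]⟩
  · rintro (_ | j) hj
    · show -b < r 0
      linarith
    · simp only [Nat.add_one_ne_zero, if_false, Nat.add_sub_cancel]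
      split_ifs <;> try omega
      · exact hmono (by simp; omega) (by simp; omega) (by omega)
      · rw [show j = n by omega]; exact hb.1
  · rintro (_ | j) hj
    · show 0 < (-1) ^ (n + 2) * He (n + 2) (-b)
      rw [He_neg, ← mul_assoc, ← pow_add, ← two_mul, pow_mul]
      simpa using hbpos
    · simp only [Nat.add_one_ne_zero, if_false, Nat.add_sub_cancel]
      split_ifs
      · rw [He_succ_succ_of_root (hroot j (by omega)).1,
          show n + 2 - (j + 1) = n - j + 1 by omega, pow_succ]
        nlinarith [(hroot j (by omega)).2]
      · rw [show n + 2 - (j + 1) = 0 by omega]; simpa using hbpos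

theorem InterlacedRoots.exists_succ {n : ℕ} {r : ℕ → ℝ} (hr : InterlacedRoots n r) :
    ∃ s, InterlacedRoots (n + 1) s := by
  obtain ⟨x, hx_lt, hx_sign, hx_eq⟩ := hr.exists_alternating_points
  obtain ⟨hmono, hroot⟩ := hr
  have hr_le : ∀ i j, i ≤ j → j ≤ n → r i ≤ r j := fun i j hij hj =>
    hmono.monotoneOn (Set.mem_Iic.2 (hij.trans hj)) (Set.mem_Iic.2 hj) hij
  obtain ⟨y, hy⟩ := exists_roots_of_alternating (continuous_He _) hx_lt hx_sign
  refine ⟨y, fun i hi j hj hij => ?_, fun j hj => ⟨(hy j (by omega)).2.2, ?_⟩⟩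
  · rw [Set.mem_Iic] at hi hj
    calc y i < x (i + 1) := (hy i (by omega)).2.1
      _ = r i := hx_eq (i + 1) (by omega) (by omega)
      _ ≤ r (j - 1) := hr_le i (j - 1) (by omega) (by omega)
      _ = x j := (hx_eq j (by omega) (by omega)).symm
      _ < y j := (hy j (by omega)).1
  · rw [He_succ_eq_prod_sub hmono (fun k hk => (hroot k hk).1)]
    refine neg_one_pow_mul_prod_sub_pos hj (fun k hk => ?_) (fun k hjk hk => ?_)
    · calc r k ≤ r (j - 1) := hr_le k (j - 1) (by omega) (by omega)
        _ = x j := (hx_eq j (by omega) hj).symm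
        _ < y j := (hy j (by omega)).1
    · calc y j < x (j + 1) := (hy j (by omega)).2.1
        _ = r j := hx_eq (j + 1) (by omega) (by omega)
        _ ≤ r k := hr_le j k hjk (by omega)

theorem exists_interlacedRoots (n : ℕ) : ∃ r, InterlacedRoots n r := by
  induction n with
  | zero => exact ⟨0, interlacedRoots_zero⟩
  | succ n ih => exact ih.choose_spec.exists_succ

theorem exists_strictMono_roots_He (n : ℕ) :
    ∃ c : Fin (n + 1) → ℝ, StrictMono c ∧ ∀ j, He (n + 1) (c j) = 0 := by
  obtain ⟨r, hmono, hroot⟩ := exists_interlacedRoots n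
  exact ⟨fun j => r j, fun i j hij => hmono (Nat.lt_succ_iff.1 i.2) (Nat.lt_succ_iff.1 j.2) hij,
    fun j => (hroot j (Nat.lt_succ_iff.1 j.2)).1⟩

theorem Mtri_mulVec_apply (M : ℕ) (u θ : ℝ) (f : ℕ → ℝ) (i : Fin (M + 1)) :
    (Mtri M u θ *ᵥ fun j => f j) i =
      u * f i + (if (i : ℕ) = 0 then 0 else θ * f (i - 1)) +
        (if (i : ℕ) = M then 0 else ((i : ℝ) + 1) * f (i + 1)) := by
  have hterm : ∀ j : ℕ, (if (i : ℕ) = j then u else if (i : ℕ) = j + 1 then θ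
      else if j = (i : ℕ) + 1 then (i : ℝ) + 1 else 0) * f j =
      (if j = i then u * f j else 0) +
        (if j = i - 1 then (if (i : ℕ) = 0 then 0 else θ * f j) else 0) +
        (if j = i + 1 then ((i : ℝ) + 1) * f j else 0) := by
    intro j
    split_ifs <;> first | omega | ring
  simp only [mulVec, dotProduct, Mtri]
  rw [Fin.sum_univ_eq_sum_range (fun j => (if (i : ℕ) = j then u else if (i : ℕ) = j + 1 then θ
      else if j = (i : ℕ) + 1 then (i : ℝ) + 1 else 0) * f j),
    Finset.sum_congr rfl fun j _ => hterm j, Finset.sum_add_distrib, Finset.sum_add_distrib,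
    Finset.sum_ite_eq', Finset.sum_ite_eq', Finset.sum_ite_eq']
  simp only [Finset.mem_range]
  split_ifs <;> first | omega | simp_all

open Nat in
noncomputable def hermiteVec (s x : ℝ) (m : ℕ) : ℝ := s ^ m / m ! * He m x

theorem hermiteVec_recurrence (s x : ℝ) (i : ℕ) :
    (if i = 0 then 0 else s ^ 2 * hermiteVec s x (i - 1)) + (i + 1) * hermiteVec s x (i + 1) =
      x * s * hermiteVec s x i := by
  cases i with
  | zero => simp [hermiteVec, He]; ring
  | succ a =>
    simp only [hermiteVec, Nat.add_one_ne_zero, if_false, Nat.add_sub_cancel, He,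
      Nat.factorial_succ]
    push_cast
    field_simp
    ring

theorem Mtri_mulVec_hermiteVec (M : ℕ) (u s : ℝ) {x : ℝ} (hx : He (M + 1) x = 0) :
    (Mtri M u (s ^ 2) *ᵥ fun j => hermiteVec s x j) =
      (u + x * s) • fun j : Fin (M + 1) => hermiteVec s x j := by
  ext i
  have hlast : (if (i : ℕ) = M then 0 else ((i : ℝ) + 1) * hermiteVec s x (i + 1)) =
      ((i : ℝ) + 1) * hermiteVec s x (i + 1) := by
    split_ifs with hiM
    · simp [hermiteVec, hiM, hx]
    · rfl
  rw [Mtri_mulVec_apply, hlast, Pi.smul_apply, smul_eq_mul]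
  linear_combination hermiteVec_recurrence s x i

namespace Matrix

variable {K n : Type*} [Field K] [Fintype n] [DecidableEq n] {A P : Matrix n n K} {d : n → K}

theorem isUnit_of_eigenvector_cols (hd : Function.Injective d) (hP : ∀ j, P.col j ≠ 0)
    (hAP : ∀ j, A *ᵥ P.col j = d j • P.col j) : IsUnit P :=
  linearIndependent_cols_iff_isUnit.1 <|
    Module.End.eigenvectors_linearIndependent' (toLin' A) d hd P.col fun j =>
      Module.End.hasEigenvector_iff.2
        ⟨Module.End.mem_eigenspace_iff.2 (by rw [toLin'_apply, hAP]), hP j⟩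

theorem eq_mul_diagonal_mul_inv_of_mulVec_col (hP : IsUnit P)
    (hAP : ∀ j, A *ᵥ P.col j = d j • P.col j) : A = P * diagonal d * P⁻¹ := by
  have hcomm : A * P = P * diagonal d := by
    ext i j
    rw [mul_diagonal]
    exact (congrFun (hAP j) i).trans (mul_comm _ _)
  rw [← hcomm, mul_nonsing_inv_cancel_right _ _ ((isUnit_iff_isUnit_det P).1 hP)]

end Matrix

theorem Mtri_real_diagonalizable_general (M : ℕ) (u θ : ℝ) (hθ : 0 < θ) :
    ∃ c : Fin (M + 1) → ℝ, StrictMono c ∧ (∀ j, He (M + 1) (c j) = 0) ∧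
      ∃ P : Matrix (Fin (M + 1)) (Fin (M + 1)) ℝ, IsUnit P ∧
        Mtri M u θ =
          P * Matrix.diagonal (fun j => u + c j * Real.sqrt θ) * P⁻¹ := by
  obtain ⟨c, hc, hroot⟩ := exists_strictMono_roots_He M
  set s := Real.sqrt θ
  have hs : 0 < s := Real.sqrt_pos.2 hθ
  set P : Matrix (Fin (M + 1)) (Fin (M + 1)) ℝ := Matrix.of fun α j => hermiteVec s (c j) α
  have hAP : ∀ j, Mtri M u θ *ᵥ P.col j = (u + c j * s) • P.col j := fun j => by
    rw [← Real.sq_sqrt hθ.le]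
    exact Mtri_mulVec_hermiteVec M u s (hroot j)
  have hd : Function.Injective fun j => u + c j * s := fun i j h =>
    hc.injective (by simpa [hs.ne'] using h)
  have hP0 : ∀ j, P.col j ≠ 0 := fun j h => by simpa [P, hermiteVec, He] using congrFun h 0
  have hP := isUnit_of_eigenvector_cols hd hP0 hAP
  exact ⟨c, hc, hroot, P, hP, eq_mul_diagonal_mul_inv_of_mulVec_col hP hAP⟩

theorem Mtri_real_diagonalizable (M : ℕ) (hM : 1 ≤ M) (u θ : ℝ) (hθ : 0 < θ) :
    ∃ c : Fin (M + 1) → ℝ, StrictMono c ∧ (∀ j, He (M + 1) (c j) = 0) ∧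
      ∃ P : Matrix (Fin (M + 1)) (Fin (M + 1)) ℝ, IsUnit P ∧
        Mtri M u θ =
          P * Matrix.diagonal (fun j => u + c j * Real.sqrt θ) * P⁻¹ :=
  Mtri_real_diagonalizable_general M u θ hθ
end

section
/- Let A(w) be the (M+1)×(M+1) coefficient matrix of Grad's moment system and let Â(w) = A(w) − (M+1) f_M E_{M+1,2} − ((M+1)/2) f_{M−1} E_{M+1,3}, where E_{p,q} is the matrix with a single 1 in position (p,q). Then the characteristic polynomial of Â(w) is det(λI − Â(w)) = θ^{(M+1)/2} He_{M+1}((λ − u)/√θ) for θ > 0. -/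
/-- Coefficients with the conventions f₀ = ρ, f₁ = f₂ = 0. -/
noncomputable def gcoef (ρ : ℝ) (f : ℕ → ℝ) : ℕ → ℝ :=
  fun n => if n = 0 then ρ else if n ≤ 2 then 0 else f n

/-- The coefficient matrix A(w) of Grad's (M+1)-moment system (eq. (14) of the paper),
with state w = (ρ, u, θ, f₃, …, f_M), in 0-based indices. -/
noncomputable def gradA (M : ℕ) (ρ u θ : ℝ) (f : ℕ → ℝ) :
    Matrix (Fin (M + 1)) (Fin (M + 1)) ℝ :=
  fun r c =>
    if (r : ℕ) = 0 then
      (if (c : ℕ) = 0 then u else if (c : ℕ) = 1 then ρ else 0)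
    else if (r : ℕ) = 1 then
      (if (c : ℕ) = 0 then θ / ρ else if (c : ℕ) = 1 then u
       else if (c : ℕ) = 2 then 1 else 0)
    else if (r : ℕ) = 2 then
      (if (c : ℕ) = 1 then 2 * θ else if (c : ℕ) = 2 then u
       else if (c : ℕ) = 3 then 6 / ρ else 0)
    else
      (if (c : ℕ) = 0 then -θ * gcoef ρ f ((r : ℕ) - 1) / ρ
       else if (c : ℕ) = 1 then ((r : ℕ) + 1 : ℝ) * gcoef ρ f (r : ℕ)
       else if (c : ℕ) = 2 then
         (((r : ℕ) - 1 : ℝ) * gcoef ρ f ((r : ℕ) - 1) + θ * gcoef ρ f ((r : ℕ) - 3)) / 2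
       else
         (if (c : ℕ) = 3 then -3 * gcoef ρ f ((r : ℕ) - 2) / ρ else 0) +
         (if (c : ℕ) + 1 = (r : ℕ) then θ else 0) +
         (if (c : ℕ) = (r : ℕ) then u else 0) +
         (if (c : ℕ) = (r : ℕ) + 1 then ((r : ℕ) + 1 : ℝ) else 0))

/-- The regularized coefficient matrix Â(w) = A(w) − (M+1) f_M E_{M+1,2}
    − ((M+1)/2) f_{M−1} E_{M+1,3}. -/
noncomputable def gradAhat (M : ℕ) (ρ u θ : ℝ) (f : ℕ → ℝ) :
    Matrix (Fin (M + 1)) (Fin (M + 1)) ℝ :=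
  gradA M ρ u θ f
    - (((M : ℝ) + 1) * gcoef ρ f M) •
        Matrix.single (Fin.last M) (1 : Fin (M + 1)) (1 : ℝ)
    - ((((M : ℝ) + 1) / 2) * gcoef ρ f (M - 1)) •
        Matrix.single (Fin.last M) (2 : Fin (M + 1)) (1 : ℝ)

/-!
Let `D = gradTransform`: row `α` of `D` is `f_{α-1} e_1 + f_{α-2}/2 e_2`, plus `e_α` when `α = 0`
or `α ≥ 3` (0-based, with `f₀ = ρ`, `f₁ = f₂ = 0`), so `D` is lower triangular with determinant
`ρ²/2`. Let `J` be the tridiagonal matrix with `u` on the diagonal, `θ` below it and `α + 1` above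
it in row `α`.
A direct computation gives `D A = J D + (M+1) e_M dᵀ`, where `d = f_M e_1 + f_{M-1}/2 e_2` is the
row `M+1` that `D` would have without truncation; since `D e_M = e_M`, the regularization
`Â = A - (M+1) e_M dᵀ` is exactly what makes `D Â = J D`. Hence `λ - Â` and `λ - J` have the same
determinant, and expanding the tridiagonal determinant along its last row gives the recurrence
`He_{n+2}(x) = x He_{n+1}(x) - (n+1) He_n(x)`, rescaled by `√θ`.
-/

theorem Fin.sum_ite_val_eq {M : Type*} [AddCommMonoid M] {n : ℕ} (m : ℕ) (g : Fin n → M) :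
    (∑ k : Fin n, if (k : ℕ) = m then g k else 0) = if h : m < n then g ⟨m, h⟩ else 0 := by
  split_ifs with h
  · rw [Finset.sum_eq_single ⟨m, h⟩ (fun k _ hk => if_neg fun hkm => hk (Fin.ext hkm))
      (fun h' => absurd (Finset.mem_univ _) h')]
    simp
  · exact Finset.sum_eq_zero fun k _ => if_neg (by omega)

namespace Matrix

variable {R : Type*}

theorem det_smul_one_sub_eq_of_mul_eq_mul [CommRing R] {n : Type*} [Fintype n] [DecidableEq n]
    {A B P : Matrix n n R} (hP : IsUnit P.det) (h : P * A = B * P) (t : R) :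
    (t • (1 : Matrix n n R) - A).det = (t • (1 : Matrix n n R) - B).det := by
  refine hP.mul_left_cancel ?_
  rw [← det_mul, mul_comm, ← det_mul, sub_mul, mul_sub, h, Matrix.mul_smul, Matrix.smul_mul,
    mul_one, one_mul]

def tridiag [AddZeroClass R] (n : ℕ) (a b c : ℕ → R) : Matrix (Fin n) (Fin n) R :=
  fun i j =>
    (if (j : ℕ) = i then a i else 0) + (if (j : ℕ) + 1 = i then b j else 0) +
      (if (j : ℕ) = i + 1 then c i else 0)

theorem tridiag_mul_apply [NonUnitalNonAssocSemiring R] {n : ℕ} (a b c : ℕ → R)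
    (B : Matrix (Fin n) (Fin n) R) (i j : Fin n) :
    (tridiag n a b c * B) i j = a i * B i j +
      (if h : 1 ≤ (i : ℕ) then b (i - 1) * B ⟨i - 1, by omega⟩ j else 0) +
      (if h : (i : ℕ) + 1 < n then c i * B ⟨i + 1, h⟩ j else 0) := by
  simp only [mul_apply, tridiag, add_mul, ite_mul, zero_mul, Finset.sum_add_distrib,
    Fin.sum_ite_val_eq, i.isLt, dite_true]
  congr 2
  obtain ⟨_ | k, hk⟩ := i
  · simp
  · simp [Fin.sum_ite_val_eq, show k < n by omega]

theorem smul_one_sub_tridiag [Ring R] (n : ℕ) (t : R) (a b c : ℕ → R) :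
    t • (1 : Matrix (Fin n) (Fin n) R) - tridiag n a b c =
      tridiag n (fun i => t - a i) (fun i => -b i) (fun i => -c i) := by
  ext i j
  simp only [sub_apply, smul_apply, one_apply, tridiag, Fin.ext_iff, smul_eq_mul]
  split_ifs <;> first | omega | simp

theorem tridiag_submatrix [AddZeroClass R] {m n : ℕ} (a b c : ℕ → R) {e : Fin n → Fin m}
    (he : ∀ i, (e i : ℕ) = i) : (tridiag m a b c).submatrix e e = tridiag n a b c := by
  ext i j
  simp [tridiag, he]

theorem det_tridiag_succ_succ [CommRing R] (n : ℕ) (a b c : ℕ → R) :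
    (tridiag (n + 2) a b c).det =
      a (n + 1) * (tridiag (n + 1) a b c).det - b n * c n * (tridiag n a b c).det := by
  have hminor : ((tridiag (n + 2) a b c).submatrix Fin.castSucc
      (Fin.last n).castSucc.succAbove).det = c n * (tridiag n a b c).det := by
    rw [det_succ_column _ (Fin.last n), Fin.sum_univ_castSucc, Finset.sum_eq_zero]
    · simp [tridiag, Fin.succAbove, Function.comp_def, tridiag_submatrix,
        show n + 1 + 1 ≠ n by omega]
    · rintro ⟨i, hi⟩ -
      simp [tridiag, Fin.succAbove, hi.ne', show n + 1 ≠ i by omega, show n + 2 ≠ i by omega]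
  rw [det_succ_row _ (Fin.last _), Fin.sum_univ_castSucc, Fin.sum_univ_castSucc,
    Finset.sum_eq_zero, Fin.succAbove_last, hminor]
  · simp [tridiag, tridiag_submatrix, show n ≠ n + 1 + 1 by omega]
    ring
  · rintro ⟨k, hk⟩ -
    simp [tridiag, hk.ne, show k ≠ n + 1 by omega, show k ≠ n + 2 by omega]

theorem det_tridiag_hermite {s : ℝ} (hs : s ≠ 0) (x : ℝ) : ∀ n : ℕ,
    (tridiag n (fun _ => x) (fun _ => -s ^ 2) (fun i => -((i : ℝ) + 1))).det = s ^ n * He n (x / s)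
  | 0 => by simp [He]
  | 1 => by simp [tridiag, He, field]
  | n + 2 => by
    rw [det_tridiag_succ_succ, det_tridiag_hermite hs x (n + 1), det_tridiag_hermite hs x n, He]
    field_simp
    ring

end Matrix

namespace GradMoment

open Matrix

@[simp] theorem gcoef_zero (ρ : ℝ) (f : ℕ → ℝ) : gcoef ρ f 0 = ρ := rfl

@[simp] theorem gcoef_one (ρ : ℝ) (f : ℕ → ℝ) : gcoef ρ f 1 = 0 := rfl

@[simp] theorem gcoef_two (ρ : ℝ) (f : ℕ → ℝ) : gcoef ρ f 2 = 0 := rfl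

noncomputable def gradTransform (M : ℕ) (ρ : ℝ) (f : ℕ → ℝ) : Matrix (Fin (M + 1)) (Fin (M + 1)) ℝ :=
  fun r c =>
    (if (c : ℕ) = r then (if (r : ℕ) = 0 ∨ 3 ≤ (r : ℕ) then 1 else 0) else 0) +
      (if (c : ℕ) = 1 then (if 1 ≤ (r : ℕ) then gcoef ρ f (r - 1) else 0) else 0) +
      (if (c : ℕ) = 2 then (if 2 ≤ (r : ℕ) then gcoef ρ f (r - 2) / 2 else 0) else 0)

theorem gradTransform_mul_apply {M : ℕ} (hM : 2 ≤ M) (ρ : ℝ) (f : ℕ → ℝ)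
    (B : Matrix (Fin (M + 1)) (Fin (M + 1)) ℝ) (r c : Fin (M + 1)) :
    (gradTransform M ρ f * B) r c =
      (if (r : ℕ) = 0 ∨ 3 ≤ (r : ℕ) then B r c else 0) +
        (if 1 ≤ (r : ℕ) then gcoef ρ f (r - 1) * B ⟨1, by omega⟩ c else 0) +
        (if 2 ≤ (r : ℕ) then gcoef ρ f (r - 2) / 2 * B ⟨2, by omega⟩ c else 0) := by
  simp only [mul_apply, gradTransform, add_mul, ite_mul, zero_mul, one_mul,
    Finset.sum_add_distrib, Fin.sum_ite_val_eq, r.isLt, show 1 < M + 1 by omega,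
    show 2 < M + 1 by omega, dite_true]

theorem isUnit_det_gradTransform {M : ℕ} {ρ : ℝ} (hρ : ρ ≠ 0) (f : ℕ → ℝ) :
    IsUnit (gradTransform M ρ f).det := by
  have hlower : (gradTransform M ρ f).IsLowerTriangular := by
    intro r c (hrc : (r : ℕ) < c)
    simp only [gradTransform]
    split_ifs <;> first | omega | simp
  rw [det_of_isLowerTriangular _ hlower, isUnit_iff_ne_zero, Finset.prod_ne_zero_iff]
  rintro ⟨r, hr⟩ -
  rcases (by omega : r = 0 ∨ r = 1 ∨ r = 2 ∨ 3 ≤ r) with rfl | rfl | rfl | h3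
  · simp [gradTransform]
  · simp [gradTransform, hρ]
  · simp [gradTransform, hρ]
  · simp [gradTransform, h3, show r ≠ 1 by omega, show r ≠ 2 by omega]

theorem gradAhat_apply {M : ℕ} (hM : 2 ≤ M) (ρ u θ : ℝ) (f : ℕ → ℝ) (r c : Fin (M + 1)) :
    gradAhat M ρ u θ f r c = gradA M ρ u θ f r c
      - (if (r : ℕ) = M ∧ (c : ℕ) = 1 then ((M : ℝ) + 1) * gcoef ρ f M else 0)
      - (if (r : ℕ) = M ∧ (c : ℕ) = 2 then ((M : ℝ) + 1) / 2 * gcoef ρ f (M - 1) else 0) := by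
  simp [gradAhat, single_apply, Fin.ext_iff, Nat.mod_eq_of_lt (show 1 < M + 1 by omega),
    Nat.mod_eq_of_lt (show 2 < M + 1 by omega), eq_comm]

theorem gradTransform_mul_gradAhat {M : ℕ} (hM : 3 ≤ M) {ρ : ℝ} (hρ : ρ ≠ 0) (u θ : ℝ)
    (f : ℕ → ℝ) :
    gradTransform M ρ f * gradAhat M ρ u θ f =
      tridiag (M + 1) (fun _ => u) (fun _ => θ) (fun i => (i : ℝ) + 1) * gradTransform M ρ f := by
  ext ⟨r, hr⟩ ⟨c, hc⟩
  rw [gradTransform_mul_apply (by omega), tridiag_mul_apply]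
  simp only [gradAhat_apply (by omega : 2 ≤ M), gradA, gradTransform]
  -- rows `0, 1, 2, M` and columns `0, 1, 2, 3` are the irregular part of `gradA`
  rcases (by omega : r = 0 ∨ r = 1 ∨ r = 2 ∨ 3 ≤ r ∧ r < M ∨ r = M) with
    rfl | rfl | rfl | ⟨h3, hrM⟩ | rfl <;>
  rcases (by omega : c = 0 ∨ c = 1 ∨ c = 2 ∨ c = 3 ∨ 4 ≤ c) with rfl | rfl | rfl | rfl | h4
  all_goals simp (disch := omega) [if_pos, if_neg, dif_pos, Nat.sub_sub]
  all_goals (try split_ifs) <;> first | omega | ring1 | field_simp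

end GradMoment

theorem charpoly_of_regularized_grad (M : ℕ) (hM : 3 ≤ M) (ρ u θ : ℝ)
    (hρ : 0 < ρ) (hθ : 0 < θ) (f : ℕ → ℝ) (lam : ℝ) :
    (lam • (1 : Matrix (Fin (M + 1)) (Fin (M + 1)) ℝ) - gradAhat M ρ u θ f).det =
      Real.sqrt θ ^ (M + 1) * He (M + 1) ((lam - u) / Real.sqrt θ) := by
  rw [Matrix.det_smul_one_sub_eq_of_mul_eq_mul (GradMoment.isUnit_det_gradTransform hρ.ne' f)
    (GradMoment.gradTransform_mul_gradAhat hM hρ.ne' u θ f), Matrix.smul_one_sub_tridiag]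
  simpa [Real.sq_sqrt hθ.le] using
    Matrix.det_tridiag_hermite (Real.sqrt_pos.2 hθ).ne' (lam - u) (M + 1)
end
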